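/- arXiv:2402.07447 — 2 statements merged into one kernel-verified Lean document; each statement's English description precedes it below -/
import Mathlib

section
/- For every α ∈ (0,1), the cubic R_α(w) = w³ − 8w² + 8(3 − 2α)w + 16(α − 1) has exactly one root in the interval (0,1). -/
/-!
`R_α(0) = 16(α - 1) < 0` and `R_α(1) = 1 > 0`, so a root in `(0,1)` exists by the intermediate
value theorem. The derivative `3w² - 16w + 8(3 - 2α)` is strictly decreasing for `w ≤ 8/3`, so
`R_α` is strictly concave on `[0,1]`. A strictly concave function is positive strictly between a
zero and a point where it is nonnegative, so there is no second root in `(0,1)`.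
-/

open Set

section StrictConcave

variable {s : Set ℝ} {f : ℝ → ℝ}

theorem StrictConcaveOn.pos_of_mem_Ioo {a y b : ℝ} (hf : StrictConcaveOn ℝ s f) (ha : a ∈ s)
    (hy : y ∈ s) (hfa : 0 ≤ f a) (hfy : 0 ≤ f y) (hb : b ∈ Ioo a y) : 0 < f b := by
  have hay := hb.1.trans hb.2
  exact (le_min hfa hfy).trans_lt
    (hf.lt_on_openSegment ha hy hay.ne (by rwa [openSegment_eq_Ioo hay]))

theorem StrictConcaveOn.subsingleton_zero_Ico {x y : ℝ} (hf : StrictConcaveOn ℝ (Icc x y) f)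
    (hy : 0 ≤ f y) : {w ∈ Ico x y | f w = 0}.Subsingleton := by
  have no_zero_after {a b : ℝ} (ha : a ∈ Ico x y) (hfa : f a = 0) (hab : a < b) (hb : b < y) :
      f b ≠ 0 :=
    (hf.pos_of_mem_Ioo (Ico_subset_Icc_self ha) (right_mem_Icc.2 (ha.1.trans ha.2.le))
      hfa.ge hy ⟨hab, hb⟩).ne'
  rintro a ⟨ha, hfa⟩ b ⟨hb, hfb⟩
  rcases lt_trichotomy a b with hab | rfl | hba
  · exact absurd hfb (no_zero_after ha hfa hab hb.2)
  · rfl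
  · exact absurd hfa (no_zero_after hb hfb hba ha.2)

theorem StrictConcaveOn.existsUnique_zero_Ioo {x y : ℝ} (hxy : x ≤ y)
    (hf : StrictConcaveOn ℝ (Icc x y) f) (hc : ContinuousOn f (Icc x y)) (hx : f x < 0)
    (hy : 0 < f y) : ∃! w, w ∈ Ioo x y ∧ f w = 0 := by
  obtain ⟨w, hw, hfw⟩ := intermediate_value_Ioo hxy hc ⟨hx, hy⟩
  exact ⟨w, ⟨hw, hfw⟩, fun v hv =>
    hf.subsingleton_zero_Ico hy.le ⟨Ioo_subset_Ico_self hv.1, hv.2⟩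
      ⟨Ioo_subset_Ico_self hw, hfw⟩⟩

end StrictConcave

def rayleighCubic (α w : ℝ) : ℝ := w ^ 3 - 8 * w ^ 2 + 8 * (3 - 2 * α) * w + 16 * (α - 1)

section RayleighCubic

variable (α : ℝ)

theorem continuous_rayleighCubic : Continuous (rayleighCubic α) := by
  unfold rayleighCubic; fun_prop

theorem hasDerivAt_rayleighCubic (w : ℝ) :
    HasDerivAt (rayleighCubic α) (3 * w ^ 2 - 16 * w + 8 * (3 - 2 * α)) w := by
  have h := (((hasDerivAt_pow 3 w).sub ((hasDerivAt_pow 2 w).const_mul 8)).add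
    ((hasDerivAt_id w).const_mul (8 * (3 - 2 * α)))).add_const (16 * (α - 1))
  exact h.congr_deriv (by norm_num; ring)

theorem strictConcaveOn_rayleighCubic_Iic :
    StrictConcaveOn ℝ (Iic (8 / 3)) (rayleighCubic α) := by
  refine StrictAntiOn.strictConcaveOn_of_deriv (convex_Iic _)
    (continuous_rayleighCubic α).continuousOn ?_
  intro a ha b hb hab
  rw [interior_Iic] at ha hb
  simp only [(hasDerivAt_rayleighCubic α _).deriv]
  nlinarith [mem_Iio.1 ha, mem_Iio.1 hb]

theorem rayleighCubic_zero : rayleighCubic α 0 = 16 * (α - 1) := by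
  unfold rayleighCubic; ring

theorem rayleighCubic_one : rayleighCubic α 1 = 1 := by
  unfold rayleighCubic; ring

end RayleighCubic

/-- For `α ∈ (0,1)`, the Rayleigh cubic has exactly one root in `(0,1)`. -/
theorem rayleigh_cubic_unique_root (α : ℝ) (hα : α ∈ Set.Ioo (0 : ℝ) 1) :
    ∃! w, w ∈ Set.Ioo (0 : ℝ) 1 ∧
      w ^ 3 - 8 * w ^ 2 + 8 * (3 - 2 * α) * w + 16 * (α - 1) = 0 := by
  have concave : StrictConcaveOn ℝ (Icc 0 1) (rayleighCubic α) :=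
    (strictConcaveOn_rayleighCubic_Iic α).subset
      (Icc_subset_Iic_self.trans (Iic_subset_Iic.2 (by norm_num))) (convex_Icc 0 1)
  have at_zero : rayleighCubic α 0 < 0 := by rw [rayleighCubic_zero]; linarith [hα.2]
  have at_one : 0 < rayleighCubic α 1 := by rw [rayleighCubic_one]; exact one_pos
  exact concave.existsUnique_zero_Ioo zero_le_one (continuous_rayleighCubic α).continuousOn
    at_zero at_one
end

section
/- Let N : ℝ → ℝ be nondecreasing with N(Λ) = 0 for Λ ≤ 0, and suppose N(Λ) = a₀ Λ^{d/2} + a₁ Λ^{(d−1)/2} + o(Λ^{(d−1)/2}) as Λ → +∞, where d ≥ 2 is an integer and a₀, a₁ are real constants. Then the Laplace–Stieltjes transform Z(t) = ∫₀^∞ e^{−tΛ} dN(Λ) satisfies Z(t) = Γ(1 + d/2) a₀ t^{−d/2} + Γ(1 + (d−1)/2) a₁ t^{−(d−1)/2} + o(t^{−(d−1)/2}) as t → 0⁺. -/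
open Filter Asymptotics MeasureTheory Set


lemma exp_int {t : ℝ} (ht : 0 < t) (Λ : ℝ) :
    ∫ s in Set.Ioi Λ, t * Real.exp (-(t*s)) = Real.exp (-(t*Λ)) := by
  rw [MeasureTheory.integral_const_mul,
    integral_comp_mul_left_Ioi (fun x => Real.exp (-x)) Λ ht, integral_exp_neg_Ioi]
  simp [smul_eq_mul, ← mul_assoc, mul_inv_cancel₀ ht.ne']

lemma exp_int' {t : ℝ} (ht : 0 < t) (Λ : ℝ) :
    ∫ s in Set.Ici Λ, t * Real.exp (-(t*s)) = Real.exp (-(t*Λ)) := by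
  rw [MeasureTheory.integral_Ici_eq_integral_Ioi, exp_int ht]

lemma exp_intble {t : ℝ} (ht : 0 < t) (Λ : ℝ) :
    MeasureTheory.IntegrableOn (fun s => t * Real.exp (-(t*s))) (Set.Ici Λ) := by
  rw [MeasureTheory.IntegrableOn, ← MeasureTheory.restrict_Ioi_eq_restrict_Ici]
  have := (exp_neg_integrableOn_Ioi Λ ht).const_mul t
  simpa [neg_mul] using this

lemma leftLim0 (N : StieltjesFunction ℝ) (h0 : ∀ x : ℝ, x ≤ 0 → N x = 0) :
    Function.leftLim N 0 = 0 := by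
  apply leftLim_eq_of_tendsto (α := ℝ) (β := ℝ)
  have : ∀ᶠ x in nhdsWithin (0:ℝ) (Set.Iio 0), N x = 0 := by
    filter_upwards [self_mem_nhdsWithin] with x hx using h0 x (le_of_lt hx)
  exact Tendsto.congr' (this.mono fun x h => h.symm) tendsto_const_nhds

lemma Nnonneg (N : StieltjesFunction ℝ) (h0 : ∀ x : ℝ, x ≤ 0 → N x = 0) {s : ℝ} (hs : 0 ≤ s) :
    0 ≤ N s := by
  have := N.mono hs; rwa [h0 0 le_rfl] at this

lemma keyA (N : StieltjesFunction ℝ) (h0 : ∀ x : ℝ, x ≤ 0 → N x = 0) {t : ℝ} (ht : 0 < t) :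
    ∫⁻ Λ in Set.Ici 0, ENNReal.ofReal (Real.exp (-(t*Λ))) ∂N.measure
      = ∫⁻ s in Set.Ioi 0, ENNReal.ofReal (t * Real.exp (-(t*s)) * N s) := by
  set f : ℝ → ℝ → ENNReal := fun Λ s =>
    Set.indicator {p : ℝ × ℝ | p.1 ≤ p.2}
      (fun p => ENNReal.ofReal (t * Real.exp (-(t*p.2)))) (Λ, s) with hf
  have hmeas : Measurable (Function.uncurry f) := by
    apply Measurable.indicator
    · exact (measurable_const.mul ((measurable_const.mul measurable_snd).neg.exp)).ennreal_ofReal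
    · exact measurableSet_le measurable_fst measurable_snd
  have h1 : ∀ Λ : ℝ, ENNReal.ofReal (Real.exp (-(t*Λ))) = ∫⁻ s, f Λ s := by
    intro Λ
    have hnn : 0 ≤ᵐ[volume.restrict (Set.Ici Λ)] fun s => t * Real.exp (-(t*s)) := by
      filter_upwards with s using by positivity
    rw [← exp_int' ht Λ, ofReal_integral_eq_lintegral_ofReal (exp_intble ht Λ) hnn]
    rw [← lintegral_indicator measurableSet_Ici]
    refine lintegral_congr fun s => ?_
    by_cases h : Λ ≤ s <;> simp [hf, Set.indicator, h]
  have h2 : ∀ s : ℝ, (∫⁻ Λ in Set.Ici 0, f Λ s ∂N.measure)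
      = Set.indicator (Set.Ioi 0) (fun s => ENNReal.ofReal (t * Real.exp (-(t*s)) * N s)) s := by
    intro s
    have hfs : ∀ Λ, f Λ s = Set.indicator (Set.Iic s)
        (fun _ => ENNReal.ofReal (t * Real.exp (-(t*s)))) Λ := by
      intro Λ
      by_cases h : Λ ≤ s
      · simp [hf, h, Set.indicator_of_mem, Set.mem_Iic.mpr h]
      · simp [hf, h, Set.indicator_of_notMem, h]
    simp_rw [hfs]
    rw [lintegral_indicator measurableSet_Iic, Measure.restrict_restrict measurableSet_Iic,
      lintegral_const, Measure.restrict_apply MeasurableSet.univ, Set.univ_inter]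
    rcases lt_trichotomy s 0 with hs | hs | hs
    · have : Set.Iic s ∩ Set.Ici 0 = ∅ := by
        ext x; simp only [Set.mem_inter_iff, Set.mem_Iic, Set.mem_Ici, Set.mem_empty_iff_false,
          iff_false, not_and, not_le]
        intro h1; linarith
      rw [this]
      simp [Set.indicator_of_notMem, not_lt.mpr hs.le, hs.not_gt]
    · subst hs
      have : Set.Iic (0:ℝ) ∩ Set.Ici 0 = Set.Icc 0 0 := by
        ext x; simp only [Set.mem_inter_iff, Set.mem_Iic, Set.mem_Ici, Set.mem_Icc, and_comm]
      rw [this, N.measure_Icc, leftLim0 N h0, h0 0 le_rfl]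
      simp
    · have : Set.Iic s ∩ Set.Ici 0 = Set.Icc 0 s := by
        ext x; simp only [Set.mem_inter_iff, Set.mem_Iic, Set.mem_Ici, Set.mem_Icc, and_comm]
      rw [this, N.measure_Icc, leftLim0 N h0, sub_zero,
        Set.indicator_of_mem (Set.mem_Ioi.mpr hs)]
      rw [← ENNReal.ofReal_mul (by positivity)]
  calc ∫⁻ Λ in Set.Ici 0, ENNReal.ofReal (Real.exp (-(t*Λ))) ∂N.measure
      = ∫⁻ Λ in Set.Ici 0, ∫⁻ s, f Λ s ∂volume ∂N.measure := by
        exact lintegral_congr h1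
    _ = ∫⁻ s, ∫⁻ Λ in Set.Ici 0, f Λ s ∂N.measure ∂volume :=
        lintegral_lintegral_swap hmeas.aemeasurable
    _ = ∫⁻ s, Set.indicator (Set.Ioi 0)
          (fun s => ENNReal.ofReal (t * Real.exp (-(t*s)) * N s)) s ∂volume :=
        lintegral_congr h2
    _ = ∫⁻ s in Set.Ioi 0, ENNReal.ofReal (t * Real.exp (-(t*s)) * N s) ∂volume :=
        lintegral_indicator measurableSet_Ioi _

lemma keyA' (N : StieltjesFunction ℝ) (h0 : ∀ x : ℝ, x ≤ 0 → N x = 0) {t : ℝ} (ht : 0 < t)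
    (hint : MeasureTheory.IntegrableOn (fun s => Real.exp (-(t*s)) * N s) (Set.Ioi 0)) :
    ∫ Λ in Set.Ici 0, Real.exp (-(t*Λ)) ∂N.measure
      = t * ∫ s in Set.Ioi 0, Real.exp (-(t*s)) * N s := by
  have hnn : 0 ≤ᵐ[N.measure.restrict (Set.Ici 0)] fun Λ => Real.exp (-(t*Λ)) := by
    filter_upwards with s using (Real.exp_pos _).le
  have hsm : AEStronglyMeasurable (fun Λ => Real.exp (-(t*Λ)))
      (N.measure.restrict (Set.Ici 0)) :=
    (Real.continuous_exp.comp (continuous_const.mul continuous_id).neg).aestronglyMeasurable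
  rw [integral_eq_lintegral_of_nonneg_ae hnn hsm, keyA N h0 ht]
  have hnn2 : 0 ≤ᵐ[volume.restrict (Set.Ioi 0)] fun s => t * (Real.exp (-(t*s)) * N s) := by
    filter_upwards [self_mem_ae_restrict measurableSet_Ioi] with s hs
    have := Nnonneg N h0 (le_of_lt hs)
    positivity
  have hint2 : MeasureTheory.IntegrableOn (fun s => t * (Real.exp (-(t*s)) * N s))
      (Set.Ioi 0) := hint.const_mul t
  simp only [mul_assoc]
  rw [← ofReal_integral_eq_lintegral_ofReal hint2 hnn2, ENNReal.toReal_ofReal, integral_const_mul]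
  apply setIntegral_nonneg measurableSet_Ioi
  intro s hs
  have := Nnonneg N h0 (le_of_lt (Set.mem_Ioi.mp hs))
  positivity

lemma gammaInt {a t : ℝ} (ha : 0 < a) (ht : 0 < t) :
    ∫ s in Set.Ioi 0, Real.exp (-(t*s)) * s ^ a = Real.Gamma (1 + a) * t ^ (-(a+1)) := by
  have := Real.integral_rpow_mul_exp_neg_mul_Ioi (a := a+1) (r := t) (by linarith) ht
  simp only [add_sub_cancel_right] at this
  rw [show (fun s : ℝ => Real.exp (-(t*s)) * s ^ a) = fun s : ℝ => s ^ a * Real.exp (-(t*s)) by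
      funext s; ring, this, one_div, Real.inv_rpow ht.le, ← Real.rpow_neg ht.le,
    add_comm 1 a, mul_comm]

lemma tmul {a t : ℝ} (ht : 0 < t) : t * t ^ (-(a+1)) = t ^ (-a) := by
  nth_rewrite 1 [← Real.rpow_one t]
  rw [← Real.rpow_add ht]; ring_nf

lemma rpow_exp_intble {a t : ℝ} (ha : -1 < a) (ht : 0 < t) :
    MeasureTheory.IntegrableOn (fun s => Real.exp (-(t*s)) * s ^ a) (Set.Ioi 0) := by
  have := integrableOn_rpow_mul_exp_neg_mul_rpow ha (by norm_num : (0:ℝ) < 1) ht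
  simp only [Real.rpow_one] at this
  refine this.congr_fun (fun s _ => by ring_nf) measurableSet_Ioi

lemma errC {q : ℝ} (hq : 0 < q) {R : ℝ → ℝ} (hRm : Measurable R)
    (hloc : ∀ M : ℝ, MeasureTheory.IntegrableOn R (Set.Ioc 0 M))
    (hR : R =o[atTop] fun s => s ^ q) :
    (fun t => t * ∫ s in Set.Ioi 0, Real.exp (-(t*s)) * R s)
      =o[nhdsWithin 0 (Set.Ioi 0)] fun t => t ^ (-q) := by
  rw [isLittleO_iff]
  intro ε hε
  have hΓ : 0 < Real.Gamma (1 + q) := Real.Gamma_pos_of_pos (by linarith)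
  set ε' : ℝ := ε / (2 * Real.Gamma (1 + q)) with hε'def
  have hε' : 0 < ε' := by positivity
  obtain ⟨M₀, hM₀⟩ := eventually_atTop.mp (hR.def hε')
  set M : ℝ := max M₀ 1 with hMdef
  have hM1 : (1:ℝ) ≤ M := le_max_right _ _
  have hM0 : (0:ℝ) < M := lt_of_lt_of_le one_pos hM1
  have hRb : ∀ s : ℝ, M ≤ s → |R s| ≤ ε' * s ^ q := by
    intro s hs
    have h1 : (1:ℝ) ≤ s := le_trans hM1 hs
    have := hM₀ s (le_trans (le_max_left _ _) hs)
    rwa [Real.norm_eq_abs, Real.norm_eq_abs, abs_of_nonneg (Real.rpow_nonneg (by linarith) q)]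
      at this
  set C : ℝ := ∫ s in Set.Ioc 0 M, ‖R s‖ with hCdef
  have hC : 0 ≤ C := setIntegral_nonneg measurableSet_Ioc fun s _ => norm_nonneg _
  have htend : Tendsto (fun t : ℝ => C * t ^ (1+q)) (nhdsWithin 0 (Set.Ioi 0)) (nhds 0) := by
    have hcont : ContinuousAt (fun t : ℝ => t ^ (1+q)) 0 :=
      Real.continuousAt_rpow_const 0 (1+q) (Or.inr (by linarith))
    have : Tendsto (fun t : ℝ => t ^ (1+q)) (nhdsWithin 0 (Set.Ioi 0)) (nhds 0) := by
      have h2 := hcont.continuousWithinAt (s := Set.Ioi 0)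
      rw [ContinuousWithinAt, Real.zero_rpow (by positivity : (1:ℝ)+q ≠ 0)] at h2
      exact h2
    simpa using this.const_mul C
  have hev : ∀ᶠ t in nhdsWithin 0 (Set.Ioi 0), C * t ^ (1+q) < ε/2 :=
    htend.eventually_lt_const (by positivity)
  filter_upwards [self_mem_nhdsWithin, hev] with t ht hsmall
  have ht : (0:ℝ) < t := ht
  have hI1 : MeasureTheory.IntegrableOn (fun s => Real.exp (-(t*s)) * R s) (Set.Ioc 0 M) := by
    apply Integrable.bdd_mul (c := 1) (hloc M)
    · exact (Real.continuous_exp.comp (continuous_const.mul continuous_id).neg).aestronglyMeasurable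
    · filter_upwards [self_mem_ae_restrict measurableSet_Ioc] with s hs
      rw [Real.norm_eq_abs, abs_of_pos (Real.exp_pos _), Real.exp_le_one_iff]
      have : 0 < s := hs.1
      nlinarith
  have hdom : MeasureTheory.IntegrableOn (fun s => ε' * (Real.exp (-(t*s)) * s ^ q))
      (Set.Ioi 0) := ((rpow_exp_intble (by linarith) ht)).const_mul ε'
  have hI2 : MeasureTheory.IntegrableOn (fun s => Real.exp (-(t*s)) * R s) (Set.Ioi M) := by
    apply Integrable.mono' (hdom.mono_set (Set.Ioi_subset_Ioi hM0.le))
    · exact ((Real.continuous_exp.comp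
        (continuous_const.mul continuous_id).neg).measurable.mul hRm).aestronglyMeasurable
    · filter_upwards [self_mem_ae_restrict measurableSet_Ioi] with s hs
      have hsM : M ≤ s := le_of_lt hs
      have hs0 : (0:ℝ) < s := lt_of_lt_of_le hM0 hsM
      rw [Real.norm_eq_abs, abs_mul, abs_of_pos (Real.exp_pos _)]
      calc Real.exp (-(t*s)) * |R s| ≤ Real.exp (-(t*s)) * (ε' * s ^ q) := by
            exact mul_le_mul_of_nonneg_left (hRb s hsM) (Real.exp_pos _).le
        _ = ε' * (Real.exp (-(t*s)) * s ^ q) := by ring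
  have hsplit : ∫ s in Set.Ioi 0, Real.exp (-(t*s)) * R s
      = (∫ s in Set.Ioc 0 M, Real.exp (-(t*s)) * R s)
        + ∫ s in Set.Ioi M, Real.exp (-(t*s)) * R s := by
    rw [← MeasureTheory.setIntegral_union (Set.Ioc_disjoint_Ioi le_rfl) measurableSet_Ioi hI1 hI2,
      Set.Ioc_union_Ioi_eq_Ioi hM0.le]
  have hb1 : ‖∫ s in Set.Ioc 0 M, Real.exp (-(t*s)) * R s‖ ≤ C := by
    refine le_trans (norm_integral_le_integral_norm _) ?_
    apply setIntegral_mono_on hI1.norm (hloc M).norm measurableSet_Ioc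
    intro s hs
    rw [Real.norm_eq_abs, Real.norm_eq_abs, abs_mul, abs_of_pos (Real.exp_pos _)]
    have h1 : Real.exp (-(t*s)) ≤ 1 := by
      rw [Real.exp_le_one_iff]; have : 0 < s := hs.1; nlinarith
    nlinarith [abs_nonneg (R s), Real.exp_pos (-(t*s))]
  have hb2 : ‖∫ s in Set.Ioi M, Real.exp (-(t*s)) * R s‖
      ≤ ε' * (Real.Gamma (1+q) * t ^ (-(q+1))) := by
    refine le_trans (norm_integral_le_integral_norm _) ?_
    have step1 : ∫ s in Set.Ioi M, ‖Real.exp (-(t*s)) * R s‖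
        ≤ ∫ s in Set.Ioi M, ε' * (Real.exp (-(t*s)) * s ^ q) := by
      apply setIntegral_mono_on hI2.norm (hdom.mono_set (Set.Ioi_subset_Ioi hM0.le))
        measurableSet_Ioi
      intro s hs
      have hsM : M ≤ s := le_of_lt hs
      rw [Real.norm_eq_abs, abs_mul, abs_of_pos (Real.exp_pos _)]
      calc Real.exp (-(t*s)) * |R s| ≤ Real.exp (-(t*s)) * (ε' * s ^ q) :=
            mul_le_mul_of_nonneg_left (hRb s hsM) (Real.exp_pos _).le
        _ = ε' * (Real.exp (-(t*s)) * s ^ q) := by ring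
    have step2 : ∫ s in Set.Ioi M, ε' * (Real.exp (-(t*s)) * s ^ q)
        ≤ ∫ s in Set.Ioi 0, ε' * (Real.exp (-(t*s)) * s ^ q) := by
      apply setIntegral_mono_set hdom
      · filter_upwards [self_mem_ae_restrict measurableSet_Ioi] with s hs
        have : (0:ℝ) < s := hs
        have : (0:ℝ) ≤ s ^ q := Real.rpow_nonneg this.le q
        positivity
      · exact HasSubset.Subset.eventuallyLE (Set.Ioi_subset_Ioi hM0.le)
    refine le_trans step1 (le_trans step2 ?_)
    rw [MeasureTheory.integral_const_mul, gammaInt hq ht]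
  have hkey : ‖t * ∫ s in Set.Ioi 0, Real.exp (-(t*s)) * R s‖
      ≤ t * (C + ε' * (Real.Gamma (1+q) * t ^ (-(q+1)))) := by
    rw [norm_mul, Real.norm_eq_abs t, abs_of_pos ht]
    apply mul_le_mul_of_nonneg_left _ ht.le
    rw [hsplit]
    exact le_trans (norm_add_le _ _) (add_le_add hb1 hb2)
  refine le_trans hkey ?_
  have hteq : t = t ^ (1+q) * t ^ (-q) := by
    rw [← Real.rpow_add ht, add_neg_cancel_right, Real.rpow_one]
  have htq : (0:ℝ) ≤ t ^ (-q) := Real.rpow_nonneg ht.le _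
  have h2 : t * (ε' * (Real.Gamma (1+q) * t ^ (-(q+1)))) = (ε/2) * t ^ (-q) := by
    have hA : t * t ^ (-(q+1)) = t ^ (-q) := tmul ht
    have hB : ε' * Real.Gamma (1+q) = ε/2 := by
      rw [hε'def]; field_simp
    calc t * (ε' * (Real.Gamma (1+q) * t ^ (-(q+1))))
        = (ε' * Real.Gamma (1+q)) * (t * t ^ (-(q+1))) := by ring
      _ = (ε/2) * t ^ (-q) := by rw [hA, hB]
  have h1 : t * C ≤ (ε/2) * t ^ (-q) := by
    calc t * C = (C * t ^ (1+q)) * t ^ (-q) := by rw [mul_comm t C]; nth_rewrite 1 [hteq]; ring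
      _ ≤ (ε/2) * t ^ (-q) := mul_le_mul_of_nonneg_right hsmall.le htq
  calc t * (C + ε' * (Real.Gamma (1+q) * t ^ (-(q+1))))
      = t * C + t * (ε' * (Real.Gamma (1+q) * t ^ (-(q+1)))) := by ring
    _ ≤ (ε/2) * t ^ (-q) + (ε/2) * t ^ (-q) := by rw [h2]; exact add_le_add_left h1 _
    _ = ε * t ^ (-q) := by ring
    _ = ε * ‖t ^ (-q)‖ := by rw [Real.norm_eq_abs, abs_of_nonneg htq]

lemma Rmeas (N : StieltjesFunction ℝ) (a₀ a₁ p q : ℝ) :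
    Measurable (fun s : ℝ => N s - (a₀ * s ^ p + a₁ * s ^ q)) :=
  (N.mono.measurable).sub (((measurable_id.pow_const p).const_mul a₀).add
    ((measurable_id.pow_const q).const_mul a₁))

lemma Rloc (N : StieltjesFunction ℝ) (a₀ a₁ p q : ℝ) (hp : 0 ≤ p) (hq : 0 ≤ q) (M : ℝ) :
    MeasureTheory.IntegrableOn (fun s : ℝ => N s - (a₀ * s ^ p + a₁ * s ^ q))
      (Set.Ioc 0 M) := by
  apply MeasureTheory.IntegrableOn.mono_set _ Set.Ioc_subset_Icc_self
  apply MeasureTheory.Integrable.sub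
  · exact (N.mono.monotoneOn _).integrableOn_isCompact isCompact_Icc
  · apply ContinuousOn.integrableOn_compact isCompact_Icc
    exact ((continuous_const.mul (Real.continuous_rpow_const hp)).add
      (continuous_const.mul (Real.continuous_rpow_const hq))).continuousOn

lemma Nint (N : StieltjesFunction ℝ) (h0 : ∀ x : ℝ, x ≤ 0 → N x = 0) {a₀ a₁ p q : ℝ}
    (hp : 0 < p) (hq : 0 < q)
    (hR : (fun s : ℝ => N s - (a₀ * s ^ p + a₁ * s ^ q)) =o[atTop] fun s : ℝ => s ^ q)
    {t : ℝ} (ht : 0 < t) :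
    MeasureTheory.IntegrableOn (fun s => Real.exp (-(t*s)) * N s) (Set.Ioi 0) := by
  set R : ℝ → ℝ := fun s => N s - (a₀ * s ^ p + a₁ * s ^ q) with hRdef
  obtain ⟨M₀, hM₀⟩ := eventually_atTop.mp (hR.def one_pos)
  set M : ℝ := max M₀ 1 with hMdef
  have hM1 : (1:ℝ) ≤ M := le_max_right _ _
  have hM0 : (0:ℝ) < M := lt_of_lt_of_le one_pos hM1
  have hE1 : MeasureTheory.IntegrableOn (fun s => Real.exp (-(t*s)) * R s) (Set.Ioc 0 M) := by
    apply Integrable.bdd_mul (c := 1) (Rloc N a₀ a₁ p q hp.le hq.le M)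
    · exact (Real.continuous_exp.comp (continuous_const.mul continuous_id).neg).aestronglyMeasurable
    · filter_upwards [self_mem_ae_restrict measurableSet_Ioc] with s hs
      rw [Real.norm_eq_abs, abs_of_pos (Real.exp_pos _), Real.exp_le_one_iff]
      have : 0 < s := hs.1
      nlinarith
  have hdom : MeasureTheory.IntegrableOn (fun s => Real.exp (-(t*s)) * s ^ q)
      (Set.Ioi 0) := rpow_exp_intble (by linarith) ht
  have hE2 : MeasureTheory.IntegrableOn (fun s => Real.exp (-(t*s)) * R s) (Set.Ioi M) := by
    apply Integrable.mono' (hdom.mono_set (Set.Ioi_subset_Ioi hM0.le))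
    · exact ((Real.continuous_exp.comp
        (continuous_const.mul continuous_id).neg).measurable.mul (Rmeas N a₀ a₁ p q)).aestronglyMeasurable
    · filter_upwards [self_mem_ae_restrict measurableSet_Ioi] with s hs
      have hsM : M ≤ s := le_of_lt hs
      have hs1 : (1:ℝ) ≤ s := le_trans hM1 hsM
      have hb := hM₀ s (le_trans (le_max_left _ _) hsM)
      rw [Real.norm_eq_abs, Real.norm_eq_abs, one_mul,
        abs_of_nonneg (Real.rpow_nonneg (by linarith) q)] at hb
      rw [Real.norm_eq_abs, abs_mul, abs_of_pos (Real.exp_pos _)]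
      calc Real.exp (-(t*s)) * |R s| ≤ Real.exp (-(t*s)) * s ^ q :=
            mul_le_mul_of_nonneg_left hb (Real.exp_pos _).le
        _ = Real.exp (-(t*s)) * s ^ q := rfl
  have hE : MeasureTheory.IntegrableOn (fun s => Real.exp (-(t*s)) * R s) (Set.Ioi 0) := by
    have := hE1.union hE2
    rwa [Set.Ioc_union_Ioi_eq_Ioi hM0.le] at this
  have heq : (fun s : ℝ => Real.exp (-(t*s)) * N s)
      = fun s => a₀ * (Real.exp (-(t*s)) * s ^ p) + a₁ * (Real.exp (-(t*s)) * s ^ q)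
          + Real.exp (-(t*s)) * R s := by
    funext s; simp only [hRdef]; ring
  rw [heq]
  exact (((rpow_exp_intble (by linarith) ht).const_mul a₀).add
    ((rpow_exp_intble (by linarith) ht).const_mul a₁)).add hE

/-- Abelian theorem: a two-term Weyl asymptotic
`N(Λ) = a₀Λ^{d/2} + a₁Λ^{(d−1)/2} + o(Λ^{(d−1)/2})` for a nondecreasing
(Stieltjes) function vanishing on `(−∞,0]` yields the two-term small-time
asymptotic `Z(t) = Γ(1+d/2)a₀ t^{−d/2} + Γ(1+(d−1)/2)a₁ t^{−(d−1)/2} + o(t^{−(d−1)/2})`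
for its Laplace–Stieltjes transform. -/
theorem abelian_two_term (d : ℕ) (hd : 2 ≤ d) (a₀ a₁ : ℝ) (N : StieltjesFunction ℝ)
    (h0 : ∀ x : ℝ, x ≤ 0 → N x = 0)
    (hN : (fun Λ : ℝ => N Λ - (a₀ * Λ ^ ((d : ℝ) / 2) + a₁ * Λ ^ (((d : ℝ) - 1) / 2)))
      =o[atTop] fun Λ : ℝ => Λ ^ (((d : ℝ) - 1) / 2)) :
    (fun t : ℝ => (∫ Λ in Set.Ici (0 : ℝ), Real.exp (-t * Λ) ∂N.measure)
        - (Real.Gamma (1 + (d : ℝ) / 2) * a₀ * t ^ (-((d : ℝ) / 2))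
          + Real.Gamma (1 + ((d : ℝ) - 1) / 2) * a₁ * t ^ (-(((d : ℝ) - 1) / 2))))
      =o[nhdsWithin 0 (Set.Ioi 0)] fun t : ℝ => t ^ (-(((d : ℝ) - 1) / 2)) := by
  have hd2 : (2:ℝ) ≤ (d:ℝ) := by exact_mod_cast hd
  set p : ℝ := (d : ℝ) / 2 with hpdef
  set q : ℝ := ((d : ℝ) - 1) / 2 with hqdef
  have hp : 0 < p := by rw [hpdef]; linarith
  have hq : 0 < q := by rw [hqdef]; linarith
  set R : ℝ → ℝ := fun s => N s - (a₀ * s ^ p + a₁ * s ^ q) with hRdef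
  have hE := errC hq (Rmeas N a₀ a₁ p q) (Rloc N a₀ a₁ p q hp.le hq.le) hN
  refine hE.congr' ?_ EventuallyEq.rfl
  filter_upwards [self_mem_nhdsWithin] with t ht
  have ht : (0:ℝ) < t := ht
  have hip := rpow_exp_intble (a := p) (by linarith) ht
  have hiq := rpow_exp_intble (a := q) (by linarith) ht
  have hiN := Nint N h0 hp hq hN ht
  have heq : (fun s : ℝ => Real.exp (-(t*s)) * R s)
      = fun s => Real.exp (-(t*s)) * N s
          - (a₀ * (Real.exp (-(t*s)) * s ^ p) + a₁ * (Real.exp (-(t*s)) * s ^ q)) := by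
    funext s; simp only [hRdef]; ring
  have hsum : MeasureTheory.IntegrableOn
      (fun s => a₀ * (Real.exp (-(t*s)) * s ^ p) + a₁ * (Real.exp (-(t*s)) * s ^ q))
      (Set.Ioi 0) := (hip.const_mul a₀).add (hiq.const_mul a₁)
  calc t * ∫ s in Set.Ioi 0, Real.exp (-(t*s)) * R s
      = t * ((∫ s in Set.Ioi 0, Real.exp (-(t*s)) * N s)
          - ∫ s in Set.Ioi 0, (a₀ * (Real.exp (-(t*s)) * s ^ p)
            + a₁ * (Real.exp (-(t*s)) * s ^ q))) := by
        rw [heq, MeasureTheory.integral_sub hiN hsum]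
    _ = (t * ∫ s in Set.Ioi 0, Real.exp (-(t*s)) * N s)
          - (a₀ * (t * ∫ s in Set.Ioi 0, Real.exp (-(t*s)) * s ^ p)
            + a₁ * (t * ∫ s in Set.Ioi 0, Real.exp (-(t*s)) * s ^ q)) := by
        rw [MeasureTheory.integral_add (hip.const_mul a₀) (hiq.const_mul a₁),
          MeasureTheory.integral_const_mul, MeasureTheory.integral_const_mul]
        ring
    _ = (∫ Λ in Set.Ici (0 : ℝ), Real.exp (-t * Λ) ∂N.measure)
        - (Real.Gamma (1 + p) * a₀ * t ^ (-p) + Real.Gamma (1 + q) * a₁ * t ^ (-q)) := by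
        rw [← keyA' N h0 ht hiN, gammaInt hp ht, gammaInt hq ht]
        simp only [neg_mul]
        rw [show t * (Real.Gamma (1+p) * t ^ (-(p+1)))
            = Real.Gamma (1+p) * (t * t ^ (-(p+1))) by ring, tmul ht,
          show t * (Real.Gamma (1+q) * t ^ (-(q+1)))
            = Real.Gamma (1+q) * (t * t ^ (-(q+1))) by ring, tmul ht]
        ring
end
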